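/- arXiv:2505.15943 — 2 statements merged into one kernel-verified Lean document; each statement's English description precedes it below -/
import Mathlib

section
/- There exists a constant C_A > 0 such that for all z ∈ ℂ with |z| ≥ 2 and all t ∈ [0, 2π], g_A(-(z + |z|^{-1/2} e^{it})) ≤ C_A · g_A(-z), where g_A(w) = exp(-(2/3) Re w^{3/2}) via the principal branch. -/
/-!
`Re w^{3/2} = |w|^{3/2} cos(3 arg w / 2)` is even in `arg w`, so it does not change when `w` is
folded into the closed upper half-plane, and folding is 1-Lipschitz. There the principal square
roots lie in the closed first quadrant, so `|√w₁ + √w₂| ≥ |√w₂|`, and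
`w₁^{3/2} - w₂^{3/2} = w₁ (w₁ - w₂) / (√w₁ + √w₂) + (w₁ - w₂) √w₂`
has modulus at most `|w₁ - w₂| (|w₁| / √|w₂| + √|w₂|)`. For `w₂ = -z` and `|w₁ - w₂| = |z|^{-1/2}`
this is at most `3`, so `C = e²` works.
-/

/-- g_A(w) = exp(-(2/3) Re w^{3/2}), principal branch. -/
noncomputable def gA (w : ℂ) : ℝ := Real.exp (-(2/3) * (w ^ ((3:ℂ)/2)).re)

open Complex ComplexConjugate

namespace Complex

lemma cpow_three_halves_eq_mul_cpow_inv_two (w : ℂ) :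
    w ^ ((3:ℂ)/2) = w * w ^ (2⁻¹ : ℂ) := by
  rcases eq_or_ne w 0 with rfl | hw
  · simp
  · rw [show (3:ℂ)/2 = 1 + 2⁻¹ by norm_num, cpow_add _ _ hw, cpow_one]

lemma norm_cpow_inv_two (w : ℂ) : ‖w ^ (2⁻¹ : ℂ)‖ = √‖w‖ := by
  rw [← Real.sqrt_sq (norm_nonneg (w ^ (2⁻¹ : ℂ))), ← norm_pow, cpow_ofNat_inv_pow]

lemma norm_le_norm_add_of_nonneg {a b : ℂ} (ha : 0 ≤ a.re ∧ 0 ≤ a.im) (hb : 0 ≤ b.re ∧ 0 ≤ b.im) :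
    ‖b‖ ≤ ‖a + b‖ := by
  rw [norm_def, norm_def]
  apply Real.sqrt_le_sqrt
  simp only [normSq_apply, add_re, add_im]
  nlinarith [mul_nonneg ha.1 hb.1, mul_nonneg ha.2 hb.2]

lemma cpow_inv_two_re_im_nonneg {w : ℂ} (hw : 0 ≤ w.im) :
    0 ≤ (w ^ (2⁻¹ : ℂ)).re ∧ 0 ≤ (w ^ (2⁻¹ : ℂ)).im := by
  rw [cpow_inv_two_re, cpow_inv_two_im_eq_sqrt hw]
  exact ⟨Real.sqrt_nonneg _, Real.sqrt_nonneg _⟩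

lemma norm_cpow_three_halves_sub_le {w₁ w₂ : ℂ} (h₁ : 0 ≤ w₁.im) (h₂ : 0 ≤ w₂.im) (hw₂ : w₂ ≠ 0) :
    ‖w₁ ^ ((3:ℂ)/2) - w₂ ^ ((3:ℂ)/2)‖ ≤ ‖w₁ - w₂‖ * (‖w₁‖ / √‖w₂‖ + √‖w₂‖) := by
  set s₁ := w₁ ^ (2⁻¹ : ℂ)
  set s₂ := w₂ ^ (2⁻¹ : ℂ)
  have hs₂ : ‖s₂‖ = √‖w₂‖ := norm_cpow_inv_two w₂
  have hs₂_pos : 0 < √‖w₂‖ := Real.sqrt_pos.mpr (norm_pos_iff.mpr hw₂)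
  have hsum : √‖w₂‖ ≤ ‖s₁ + s₂‖ :=
    hs₂ ▸ norm_le_norm_add_of_nonneg (cpow_inv_two_re_im_nonneg h₁) (cpow_inv_two_re_im_nonneg h₂)
  have hdiff : s₁ - s₂ = (w₁ - w₂) / (s₁ + s₂) := by
    rw [eq_div_iff (norm_pos_iff.mp (hs₂_pos.trans_le hsum))]
    linear_combination cpow_ofNat_inv_pow w₁ 2 - cpow_ofNat_inv_pow w₂ 2
  calc ‖w₁ ^ ((3:ℂ)/2) - w₂ ^ ((3:ℂ)/2)‖
      = ‖w₁ * (s₁ - s₂) + (w₁ - w₂) * s₂‖ := by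
        rw [cpow_three_halves_eq_mul_cpow_inv_two, cpow_three_halves_eq_mul_cpow_inv_two]
        congr 1; ring
    _ ≤ ‖w₁‖ * (‖w₁ - w₂‖ / ‖s₁ + s₂‖) + ‖w₁ - w₂‖ * ‖s₂‖ := by
        rw [hdiff, ← norm_div, ← norm_mul, ← norm_mul]
        exact norm_add_le _ _
    _ ≤ ‖w₁‖ * (‖w₁ - w₂‖ / √‖w₂‖) + ‖w₁ - w₂‖ * √‖w₂‖ := by
        rw [hs₂]; gcongr
    _ = ‖w₁ - w₂‖ * (‖w₁‖ / √‖w₂‖ + √‖w₂‖) := by ring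

def foldUpper (w : ℂ) : ℂ := ⟨w.re, |w.im|⟩

lemma foldUpper_im_nonneg (w : ℂ) : 0 ≤ (foldUpper w).im := abs_nonneg _

lemma norm_foldUpper (w : ℂ) : ‖foldUpper w‖ = ‖w‖ := by
  simp [norm_def, normSq_apply, foldUpper, ← sq]

lemma norm_foldUpper_sub_le (a b : ℂ) : ‖foldUpper a - foldUpper b‖ ≤ ‖a - b‖ := by
  rw [norm_def, norm_def]
  apply Real.sqrt_le_sqrt
  simp only [normSq_apply, sub_re, sub_im, foldUpper, ← sq]
  exact add_le_add_right (sq_le_sq.mpr (abs_abs_sub_abs_le_abs_sub a.im b.im)) _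

lemma re_foldUpper_cpow_ofReal (w : ℂ) (x : ℝ) :
    (foldUpper w ^ (x : ℂ)).re = (w ^ (x : ℂ)).re := by
  rcases le_or_gt 0 w.im with h | h
  · congr
    exact Complex.ext rfl (abs_of_nonneg h)
  · have hconj : foldUpper w = conj w := Complex.ext rfl (abs_of_neg h)
    have harg : w.arg ≠ Real.pi := fun hπ => h.not_ge (arg_eq_pi_iff.mp hπ).2.ge
    rw [hconj, conj_cpow _ _ harg, conj_ofReal, conj_re]

lemma abs_re_cpow_three_halves_sub_le {w₁ w₂ : ℂ} (hw₂ : w₂ ≠ 0) :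
    |(w₁ ^ ((3:ℂ)/2)).re - (w₂ ^ ((3:ℂ)/2)).re| ≤ ‖w₁ - w₂‖ * (‖w₁‖ / √‖w₂‖ + √‖w₂‖) := by
  have hre (w : ℂ) : (foldUpper w ^ ((3:ℂ)/2)).re = (w ^ ((3:ℂ)/2)).re := by
    simpa using re_foldUpper_cpow_ofReal w (3/2)
  calc |(w₁ ^ ((3:ℂ)/2)).re - (w₂ ^ ((3:ℂ)/2)).re|
      = |(foldUpper w₁ ^ ((3:ℂ)/2) - foldUpper w₂ ^ ((3:ℂ)/2)).re| := by rw [sub_re, hre, hre]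
    _ ≤ ‖foldUpper w₁ ^ ((3:ℂ)/2) - foldUpper w₂ ^ ((3:ℂ)/2)‖ := abs_re_le_norm _
    _ ≤ ‖foldUpper w₁ - foldUpper w₂‖ * (‖foldUpper w₁‖ / √‖foldUpper w₂‖ + √‖foldUpper w₂‖) :=
        norm_cpow_three_halves_sub_le (foldUpper_im_nonneg _) (foldUpper_im_nonneg _)
          (by rwa [← norm_ne_zero_iff, norm_foldUpper, norm_ne_zero_iff])
    _ ≤ ‖w₁ - w₂‖ * (‖w₁‖ / √‖w₂‖ + √‖w₂‖) := by
        rw [norm_foldUpper, norm_foldUpper]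
        gcongr
        exact norm_foldUpper_sub_le _ _

end Complex

lemma gA_le_exp_mul_gA {w₁ w₂ : ℂ} {c : ℝ}
    (h : |(w₁ ^ ((3:ℂ)/2)).re - (w₂ ^ ((3:ℂ)/2)).re| ≤ c) :
    gA w₁ ≤ Real.exp (2/3 * c) * gA w₂ := by
  rw [gA, gA, ← Real.exp_add]
  gcongr
  linarith [(abs_le.mp h).1]

lemma rpow_neg_half_mul_le_three {R : ℝ} (hR : 1 ≤ R) :
    R ^ (-(1:ℝ)/2) * ((R + R ^ (-(1:ℝ)/2)) / √R + √R) ≤ 3 := by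
  obtain ⟨s, hs, rfl⟩ : ∃ s, 1 ≤ s ∧ R = s ^ 2 :=
    ⟨√R, Real.one_le_sqrt.mpr hR, (Real.sq_sqrt (by linarith)).symm⟩
  have hδ : (s ^ 2) ^ (-(1:ℝ)/2) = s⁻¹ := by
    rw [← Real.rpow_natCast, ← Real.rpow_mul (by linarith)]; norm_num [Real.rpow_neg_one]
  rw [hδ, Real.sqrt_sq (by linarith)]
  have : (s ^ 3)⁻¹ ≤ 1 := inv_le_one_of_one_le₀ (one_le_pow₀ hs)
  calc s⁻¹ * ((s ^ 2 + s⁻¹) / s + s) = 2 + (s ^ 3)⁻¹ := by field_simp; ring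
    _ ≤ 3 := by linarith

/-- there exists C_A > 0 such that for all |z| ≥ 2 and t ∈ [0,2π],
g_A(-(z + |z|^{-1/2} e^{it})) ≤ C_A g_A(-z). -/
theorem gA_circle_bound :
    ∃ C > 0, ∀ (z : ℂ) (t : ℝ), 2 ≤ ‖z‖ → t ∈ Set.Icc (0:ℝ) (2 * Real.pi) →
      gA (-(z + ((‖z‖ ^ (-(1:ℝ)/2) : ℝ) : ℂ) * Complex.exp ((t:ℂ) * Complex.I)))
        ≤ C * gA (-z) := by
  refine ⟨Real.exp 2, Real.exp_pos 2, fun z t hz _ => ?_⟩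
  set δ := ‖z‖ ^ (-(1:ℝ)/2)
  set u : ℂ := (δ : ℂ) * Complex.exp ((t:ℂ) * Complex.I)
  have hu : ‖u‖ = δ := by
    rw [norm_mul, norm_exp_ofReal_mul_I, mul_one, norm_real, Real.norm_of_nonneg (by positivity)]
  have hz0 : -z ≠ 0 := by rw [← norm_ne_zero_iff, norm_neg]; linarith
  have hre : |((-(z + u)) ^ ((3:ℂ)/2)).re - ((-z) ^ ((3:ℂ)/2)).re| ≤ 3 :=
    calc _ ≤ ‖-(z + u) - -z‖ * (‖-(z + u)‖ / √‖-z‖ + √‖-z‖) :=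
          abs_re_cpow_three_halves_sub_le hz0
      _ ≤ δ * ((‖z‖ + δ) / √‖z‖ + √‖z‖) := by
          rw [show -(z + u) - -z = -u by ring, norm_neg, norm_neg, norm_neg, hu]
          gcongr
          exact hu ▸ norm_add_le z u
      _ ≤ 3 := rpow_neg_half_mul_le_three (by linarith)
  have h := gA_le_exp_mul_gA hre
  rwa [show (2/3 : ℝ) * 3 = 2 by norm_num] at h
end

section
/- Let r > 1 and for q ∈ L²(ℝ₊, (1+x)^r dx) and z ∈ ℂ define ω(q,z) = ∫₀^∞ |q(x)| / √(1 + |x - z|) dx. Then there is a constant C_r > 0 such that ω(q,z) ≤ C_r ‖q‖_{A_r} Ω_r(z) for all q and z, where Ω_r(z) = (log(2+|z|)/(2+|z|))^{1/2} if 1 < r < 2, and Ω_r(z) = (2+|z|)^{-1/2} if r ≥ 2. -/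
/-!
By Cauchy–Schwarz with the weight `(1+x)^r`,
`ω(q,z) ≤ ‖q‖_{A_r} (∫₀^∞ dx / ((1+|x-z|)(1+x)^r))^{1/2}`, so it suffices to bound this kernel
integral by `C/(2+|z|)`. Since `2+|z| ≤ (1+x) + (1+|x-z|)`, the kernel times `2+|z|` is at most
`(1+x)^{1-r}(1+|x-z|)^{-1} + (1+x)^{-r}`, and `u^{-a} v^{-b} ≤ u^{-(a+b)} + v^{-(a+b)}` bounds
this by translates of the integrable function `(1+|x|)^{-r}`. The resulting bound
`C (2+|z|)^{-1/2}` holds for every `r > 1`; it dominates the logarithmic weight as well, because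
`log(2+|z|) ≥ log 2`.
-/

open MeasureTheory Set

theorem integral_mul_le_sqrt_mul_sqrt_of_nonneg {α : Type*} [MeasurableSpace α]
    {μ : Measure α} {f g : α → ℝ} (hf : AEStronglyMeasurable f μ) (hg : AEStronglyMeasurable g μ)
    (hf0 : 0 ≤ᵐ[μ] f) (hg0 : 0 ≤ᵐ[μ] g)
    (hf2 : Integrable (fun x => f x ^ 2) μ) (hg2 : Integrable (fun x => g x ^ 2) μ) :
    ∫ x, f x * g x ∂μ ≤ √(∫ x, f x ^ 2 ∂μ) * √(∫ x, g x ^ 2 ∂μ) := by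
  have hfL2 : MemLp f (ENNReal.ofReal 2) μ := by
    simpa using (memLp_two_iff_integrable_sq hf).2 hf2
  have hgL2 : MemLp g (ENNReal.ofReal 2) μ := by
    simpa using (memLp_two_iff_integrable_sq hg).2 hg2
  simpa only [Real.rpow_two, Real.sqrt_eq_rpow] using
    integral_mul_le_Lp_mul_Lq_of_nonneg Real.HolderConjugate.two_two hf0 hg0 hfL2 hgL2

theorem integral_abs_div_sqrt_le {α : Type*} [MeasurableSpace α] {μ : Measure α}
    {q h ρ : α → ℝ} (hq : AEMeasurable q μ) (hh : AEMeasurable h μ) (hρ : AEMeasurable ρ μ)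
    (hpos : ∀ᵐ x ∂μ, 0 < h x ∧ 0 < ρ x)
    (hqρ : Integrable (fun x => q x ^ 2 * ρ x) μ) (hhρ : Integrable (fun x => 1 / (h x * ρ x)) μ) :
    ∫ x, |q x| / √(h x) ∂μ ≤ √(∫ x, q x ^ 2 * ρ x ∂μ) * √(∫ x, 1 / (h x * ρ x) ∂μ) := by
  have hf2 : (fun x => (|q x| * √(ρ x)) ^ 2) =ᵐ[μ] fun x => q x ^ 2 * ρ x := by
    filter_upwards [hpos] with x hx
    rw [mul_pow, sq_abs, Real.sq_sqrt hx.2.le]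
  have hg2 : (fun x => (1 / √(h x * ρ x)) ^ 2) =ᵐ[μ] fun x => 1 / (h x * ρ x) := by
    filter_upwards [hpos] with x hx
    rw [div_pow, one_pow, Real.sq_sqrt (mul_pos hx.1 hx.2).le]
  have hfg : (fun x => |q x| / √(h x)) =ᵐ[μ] fun x => |q x| * √(ρ x) * (1 / √(h x * ρ x)) := by
    filter_upwards [hpos] with x hx
    have : 0 < √(ρ x) := Real.sqrt_pos.2 hx.2
    rw [Real.sqrt_mul hx.1.le]
    field_simp
  rw [integral_congr_ae hfg, ← integral_congr_ae hf2, ← integral_congr_ae hg2]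
  exact integral_mul_le_sqrt_mul_sqrt_of_nonneg (by fun_prop)
    (by fun_prop : AEMeasurable (fun x => 1 / √(h x * ρ x)) μ).aestronglyMeasurable
    (ae_of_all _ fun x => by positivity) (ae_of_all _ fun x => by positivity)
    (hqρ.congr hf2.symm) (hhρ.congr hg2.symm)

theorem rpow_neg_mul_rpow_neg_le_add {u v a b : ℝ} (hu : 0 < u) (hv : 0 < v) (ha : 0 ≤ a)
    (hb : 0 ≤ b) : u ^ (-a) * v ^ (-b) ≤ u ^ (-(a + b)) + v ^ (-(a + b)) := by
  wlog huv : u ≤ v generalizing u v a b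
  · have := this hv hu hb ha (le_of_not_ge huv)
    rw [add_comm b a, mul_comm] at this
    linarith
  calc u ^ (-a) * v ^ (-b) ≤ u ^ (-a) * u ^ (-b) :=
        mul_le_mul_of_nonneg_left (Real.rpow_le_rpow_of_nonpos hu huv (by linarith))
          (by positivity)
    _ = u ^ (-(a + b)) := by rw [← Real.rpow_add hu, neg_add]
    _ ≤ _ := le_add_of_nonneg_right (by positivity)

theorem kernel_le_majorant {r : ℝ} (hr : 1 ≤ r) (z : ℂ) {x : ℝ} (hx : 0 ≤ x) :
    1 / ((1 + ‖(x : ℂ) - z‖) * (1 + x) ^ r)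
      ≤ (2 * (1 + |x|) ^ (-r) + (1 + |x - z.re|) ^ (-r)) / (2 + ‖z‖) := by
  set u := 1 + x
  set v := 1 + ‖(x : ℂ) - z‖
  have hu : 0 < u := by positivity
  have hv : 0 < v := by positivity
  have htriangle : 2 + ‖z‖ ≤ u + v := by
    have := norm_sub_norm_le z (x : ℂ)
    rw [norm_sub_rev] at this
    simp only [Complex.norm_real, Real.norm_eq_abs, abs_of_nonneg hx, tsub_le_iff_right] at this
    linarith
  have hre : 1 + |x - z.re| ≤ v := by
    have := Complex.abs_re_le_norm ((x : ℂ) - z)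
    simp only [Complex.sub_re, Complex.ofReal_re] at this
    simp only [v]
    linarith
  have hsplit := rpow_neg_mul_rpow_neg_le_add hu hv (sub_nonneg.2 hr) zero_le_one
  rw [sub_add_cancel] at hsplit
  rw [le_div_iff₀ (by positivity)]
  calc 1 / (v * u ^ r) * (2 + ‖z‖) ≤ 1 / (v * u ^ r) * (u + v) := by gcongr
    _ = u ^ (-(r - 1)) * v ^ (-1 : ℝ) + u ^ (-r) := by
      rw [Real.rpow_neg_one, Real.rpow_neg hu.le, Real.rpow_neg hu.le, Real.rpow_sub hu,
        Real.rpow_one]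
      field_simp
    _ ≤ u ^ (-r) + v ^ (-r) + u ^ (-r) := by gcongr
    _ ≤ 2 * (1 + |x|) ^ (-r) + (1 + |x - z.re|) ^ (-r) := by
      rw [abs_of_nonneg hx]
      have : v ^ (-r) ≤ (1 + |x - z.re|) ^ (-r) :=
        Real.rpow_le_rpow_of_nonpos (by positivity) hre (by linarith)
      linarith

theorem integrable_one_add_abs_rpow_neg {r : ℝ} (hr : 1 < r) :
    Integrable (fun x : ℝ => (1 + |x|) ^ (-r)) := by
  simpa [Real.norm_eq_abs] using
    integrable_one_add_norm (E := ℝ) (μ := volume) (r := r) (by simpa using hr)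

theorem integral_one_add_abs_rpow_neg_pos {r : ℝ} (hr : 1 < r) :
    0 < ∫ x : ℝ, (1 + |x|) ^ (-r) := by
  refine (integral_pos_iff_support_of_nonneg (fun x => by positivity)
    (integrable_one_add_abs_rpow_neg hr)).2 ?_
  have : Function.support (fun x : ℝ => (1 + |x|) ^ (-r)) = univ :=
    eq_univ_of_forall fun x => (Real.rpow_pos_of_pos (by positivity) _).ne'
  simp [this]

theorem integrable_majorant {r : ℝ} (hr : 1 < r) (z : ℂ) :
    Integrable (fun x : ℝ => (2 * (1 + |x|) ^ (-r) + (1 + |x - z.re|) ^ (-r)) / (2 + ‖z‖)) :=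
  have hw := integrable_one_add_abs_rpow_neg hr
  ((hw.const_mul 2).add (hw.comp_sub_right z.re)).div_const _

theorem integral_majorant {r : ℝ} (hr : 1 < r) (z : ℂ) :
    ∫ x : ℝ, (2 * (1 + |x|) ^ (-r) + (1 + |x - z.re|) ^ (-r)) / (2 + ‖z‖)
      = 3 * (∫ x : ℝ, (1 + |x|) ^ (-r)) / (2 + ‖z‖) := by
  have hw := integrable_one_add_abs_rpow_neg hr
  rw [integral_div, integral_add (hw.const_mul 2) (hw.comp_sub_right z.re), integral_const_mul,
    integral_sub_right_eq_self (fun x => (1 + |x|) ^ (-r))]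
  ring

theorem integrableOn_kernel {r : ℝ} (hr : 1 < r) (z : ℂ) :
    IntegrableOn (fun x : ℝ => 1 / ((1 + ‖(x : ℂ) - z‖) * (1 + x) ^ r)) (Ioi 0) := by
  refine (integrable_majorant hr z).integrableOn.mono'
    (Measurable.aestronglyMeasurable (by fun_prop)) ?_
  filter_upwards [ae_restrict_mem measurableSet_Ioi] with x (hx : 0 < x)
  rw [Real.norm_of_nonneg (by positivity)]
  exact kernel_le_majorant hr.le z hx.le

theorem setIntegral_kernel_le {r : ℝ} (hr : 1 < r) (z : ℂ) :
    ∫ x in Ioi (0 : ℝ), 1 / ((1 + ‖(x : ℂ) - z‖) * (1 + x) ^ r)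
      ≤ 3 * (∫ x : ℝ, (1 + |x|) ^ (-r)) / (2 + ‖z‖) := by
  have hm := integrable_majorant hr z
  calc _ ≤ ∫ x in Ioi 0, (2 * (1 + |x|) ^ (-r) + (1 + |x - z.re|) ^ (-r)) / (2 + ‖z‖) :=
        setIntegral_mono_on (integrableOn_kernel hr z) hm.integrableOn measurableSet_Ioi
          fun x hx => kernel_le_majorant hr.le z (le_of_lt hx)
    _ ≤ ∫ x, (2 * (1 + |x|) ^ (-r) + (1 + |x - z.re|) ^ (-r)) / (2 + ‖z‖) :=
        setIntegral_le_integral hm (ae_of_all _ fun x => by positivity)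
    _ = _ := integral_majorant hr z

theorem inv_sqrt_le_inv_sqrt_log_two_mul_ite (r : ℝ) {a : ℝ} (ha : 0 ≤ a) :
    (√(2 + a))⁻¹ ≤ (√(Real.log 2))⁻¹ *
      (if r < 2 then √(Real.log (2 + a) / (2 + a)) else (2 + a) ^ (-(1:ℝ)/2)) := by
  have hlog2 : 0 < √(Real.log 2) := Real.sqrt_pos.2 (Real.log_pos one_lt_two)
  split_ifs
  · rw [Real.sqrt_div' _ (by positivity), ← mul_div_assoc, div_eq_mul_inv _ (√(2 + a))]
    refine le_mul_of_one_le_left (by positivity) ?_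
    rw [inv_mul_eq_div, one_le_div hlog2]
    exact Real.sqrt_le_sqrt (Real.log_le_log (by norm_num) (by linarith))
  · rw [neg_div, Real.rpow_neg (by positivity), ← Real.sqrt_eq_rpow]
    have hlog : Real.log 2 ≤ 1 := Real.log_two_lt_d9.le.trans (by norm_num)
    exact le_mul_of_one_le_left (by positivity)
      ((one_le_inv₀ hlog2).2 (Real.sqrt_le_one.2 hlog))

/-- for r > 1 there is C_r > 0 with
ω(q,z) = ∫₀^∞ |q(x)|/√(1+|x-z|) dx ≤ C_r ‖q‖_{A_r} Ω_r(z), where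
Ω_r(z) = (log(2+|z|)/(2+|z|))^{1/2} for 1 < r < 2 and Ω_r(z) = (2+|z|)^{-1/2} for r ≥ 2. -/
theorem omega_bound (r : ℝ) (hr : 1 < r) :
    ∃ C > 0, ∀ (q : ℝ → ℝ) (z : ℂ), Measurable q →
      IntegrableOn (fun x => q x ^ 2 * (1 + x) ^ r) (Set.Ioi 0) →
      (∫ x in Set.Ioi (0:ℝ), |q x| / Real.sqrt (1 + ‖(x:ℂ) - z‖))
        ≤ C * (∫ x in Set.Ioi (0:ℝ), q x ^ 2 * (1 + x) ^ r) ^ ((1:ℝ)/2) *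
          (if r < 2 then Real.sqrt (Real.log (2 + ‖z‖) / (2 + ‖z‖))
           else (2 + ‖z‖) ^ (-(1:ℝ)/2)) := by
  have hI := integral_one_add_abs_rpow_neg_pos hr
  set I := ∫ x : ℝ, (1 + |x|) ^ (-r)
  refine ⟨√(3 * I) * (√(Real.log 2))⁻¹, by positivity, fun q z hq hA => ?_⟩
  set A := ∫ x in Ioi (0 : ℝ), q x ^ 2 * (1 + x) ^ r
  have hCauchySchwarz := integral_abs_div_sqrt_le (μ := volume.restrict (Ioi 0)) hq.aemeasurable
    (by fun_prop) (by fun_prop)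
    (ae_restrict_of_forall_mem measurableSet_Ioi fun x (hx : 0 < x) =>
      ⟨by positivity, by positivity⟩)
    hA (integrableOn_kernel hr z)
  rw [← Real.sqrt_eq_rpow]
  calc _ ≤ _ := hCauchySchwarz
    _ ≤ √A * √(3 * I / (2 + ‖z‖)) := by
      gcongr
      exact setIntegral_kernel_le hr z
    _ = √(3 * I) * √A * (√(2 + ‖z‖))⁻¹ := by
      rw [Real.sqrt_div' _ (by positivity)]
      ring
    _ ≤ √(3 * I) * √A * ((√(Real.log 2))⁻¹ *
          (if r < 2 then √(Real.log (2 + ‖z‖) / (2 + ‖z‖)) else (2 + ‖z‖) ^ (-(1:ℝ)/2))) := by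
      gcongr
      exact inv_sqrt_le_inv_sqrt_log_two_mul_ite r (norm_nonneg z)
    _ = _ := by ring
end
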